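/- Let η_min > 0 and let (A_k) be a sequence of nonnegative reals with A_0 = 0 and A_{k+1} ≥ A_k + (η_k + √(η_k² + 4η_k A_k))/2 where η_k ≥ η_min for all k. Then A_k ≥ (1/4)(Σ_{i=0}^{k-1} √η_i)² ≥ (η_min/4) k² for all k ≥ 0. -/

import Mathlib

/-! Since `√(η² + 4ηA) ≥ 2√(ηA)`, the recurrence gives
`A_{k+1} ≥ A_k + η_k/2 + √(η_k A_k) ≥ (√A_k + √η_k / 2)²`, so `√A_k` grows by at least `√η_k / 2`
per step and telescopes from `√A_0 = 0`. -/

open Finset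

theorem Real.sqrt_add_sqrt_div_two_le_sqrt {a b η : ℝ} (ha : 0 ≤ a) (hη : 0 ≤ η)
    (h : b ≥ a + (η + √(η ^ 2 + 4 * η * a)) / 2) : √a + √η / 2 ≤ √b := by
  have hcross : 2 * (√η * √a) ≤ √(η ^ 2 + 4 * η * a) := by
    rw [Real.le_sqrt (by positivity) (by positivity), mul_pow, mul_pow, Real.sq_sqrt hη,
      Real.sq_sqrt ha]
    nlinarith
  have hsq : (√a + √η / 2) ^ 2 = a + η / 4 + √η * √a := by
    rw [add_sq, div_pow, Real.sq_sqrt ha, Real.sq_sqrt hη]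
    ring
  rw [Real.le_sqrt (by positivity) (by linarith [Real.sqrt_nonneg (η ^ 2 + 4 * η * a)]), hsq]
  linarith

theorem add_sum_range_le_of_add_le {u d : ℕ → ℝ} (h : ∀ k, u k + d k ≤ u (k + 1)) (k : ℕ) :
    u 0 + ∑ i ∈ range k, d i ≤ u k := by
  induction k with
  | zero => simp
  | succ k ih => rw [sum_range_succ]; linarith [h k]

theorem coefficients_quadratic_growth (ηmin : ℝ) (hηmin : 0 < ηmin)
    (η : ℕ → ℝ) (hη : ∀ k, ηmin ≤ η k)
    (A : ℕ → ℝ) (hA : ∀ k, 0 ≤ A k) (hA0 : A 0 = 0)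
    (hrec : ∀ k, A (k + 1) ≥ A k + (η k + Real.sqrt ((η k) ^ 2 + 4 * η k * A k)) / 2) :
    ∀ k, A k ≥ (∑ i ∈ Finset.range k, Real.sqrt (η i)) ^ 2 / 4 ∧
      (∑ i ∈ Finset.range k, Real.sqrt (η i)) ^ 2 / 4 ≥ ηmin / 4 * (k : ℝ) ^ 2 := by
  intro k
  set S := ∑ i ∈ range k, √(η i)
  have hstep k : √(A k) + √(η k) / 2 ≤ √(A (k + 1)) :=
    Real.sqrt_add_sqrt_div_two_le_sqrt (hA k) (hηmin.le.trans (hη k)) (hrec k)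
  have hsqrt : S / 2 ≤ √(A k) := by
    simpa [hA0, S, sum_div] using add_sum_range_le_of_add_le hstep k
  have hlin : k * √ηmin ≤ S := by
    simpa using card_nsmul_le_sum (range k) _ _ fun i _ => Real.sqrt_le_sqrt (hη i)
  constructor
  · have hS : 0 ≤ S / 2 := by positivity
    calc S ^ 2 / 4 = (S / 2) ^ 2 := by ring
      _ ≤ A k := (Real.le_sqrt hS (hA k)).1 hsqrt
  · calc ηmin / 4 * (k : ℝ) ^ 2 = (k * √ηmin) ^ 2 / 4 := by
          rw [mul_pow, Real.sq_sqrt hηmin.le]; ring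
      _ ≤ S ^ 2 / 4 := by gcongr
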